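/- arXiv:1305.6828 — 2 statements merged into one kernel-verified Lean document; each statement's English description precedes it below -/
import Mathlib

section
/- Let Φ be a Δ₂-regular N-function with left derivative φ and complementary Ψ, on a measure space (Ω, Σ, μ), with S := sup { ∫ Ψ(φ(|v|)) dμ : ‖v‖_(Φ) ≤ 1 } < ∞. If f, g ∈ L^Φ(Ω) are nonnegative with ‖f‖_(Φ) = ‖g‖_(Φ) = 1, then ∫_Ω |Φ(f) − Φ(g)| dμ ≤ 2(S+1)·‖f − g‖_(Φ). In particular, the map f ↦ Φ∘f is Lipschitz from the unit sphere of L^Φ into L¹. -/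
/-!
For `0 ≤ b ≤ a` monotonicity of `φ` gives `Φ a - Φ b = ∫ t in b..a, φ t ≤ (a - b) φ a`, hence
`|Φ f - Φ g| ≤ |f - g| (|φ f| + |φ g|)` pointwise. If `∫ Φ ((f - g) / k) ≤ 1`, Young's
inequality `s |y| ≤ Φ s + Ψ y` with `s = |f - g| / k` bounds `|f - g| |φ f|` by
`k (Φ ((f - g) / k) + Ψ (φ f))`, whose integral is at most `k (1 + S)` because `‖f‖_(Φ) ≤ 1`;
likewise for `g`. Taking the infimum over all such `k` gives the bound `2 (S + 1) ‖f - g‖_(Φ)`.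
There is at least one such `k`: by convexity, if `k₁` works for `f` and `k₂` for `g`, then
`k₁ + k₂` works for `f - g`.
-/

open MeasureTheory Filter
open scoped ENNReal

noncomputable section

/-- An N-function: even, convex, vanishing exactly at 0, with Φ(x)/x → 0 at 0⁺ and → ∞ at ∞. -/
def IsNFunction (Φ : ℝ → ℝ) : Prop :=
  (∀ x, Φ (-x) = Φ x) ∧ ConvexOn ℝ Set.univ Φ ∧ (∀ x, Φ x = 0 ↔ x = 0) ∧
  Tendsto (fun x => Φ x / x) (nhdsWithin 0 (Set.Ioi 0)) (nhds 0) ∧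
  Tendsto (fun x => Φ x / x) atTop atTop

/-- The Orlicz modular ρ_Φ(f) = ∫ Φ(f) dμ (as an extended nonnegative real). -/
def orliczModular {Ω : Type*} [MeasurableSpace Ω] (μ : Measure Ω) (Φ : ℝ → ℝ)
    (f : Ω → ℝ) : ℝ≥0∞ :=
  ∫⁻ x, ENNReal.ofReal (Φ (f x)) ∂μ

/-- The gauge (Luxemburg) norm. -/
def gaugeNorm {Ω : Type*} [MeasurableSpace Ω] (μ : Measure Ω) (Φ : ℝ → ℝ)
    (f : Ω → ℝ) : ℝ :=
  sInf {k : ℝ | 0 < k ∧ orliczModular μ Φ (fun x => f x / k) ≤ 1}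

/-- Membership in the Orlicz space L^Φ. -/
def MemOrlicz {Ω : Type*} [MeasurableSpace Ω] (μ : Measure Ω) (Φ : ℝ → ℝ)
    (f : Ω → ℝ) : Prop :=
  AEMeasurable f μ ∧ ∃ a > 0, orliczModular μ Φ (fun x => a * f x) < ⊤

open Set

section EvenConvex

variable {Φ : ℝ → ℝ}

theorem apply_abs_of_even (heven : ∀ x, Φ (-x) = Φ x) (x : ℝ) : Φ |x| = Φ x := by
  rcases abs_choice x with h | h <;> simp [h, heven]

theorem le_of_abs_le_of_even_of_convexOn (heven : ∀ x, Φ (-x) = Φ x)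
    (hconv : ConvexOn ℝ univ Φ) {a b : ℝ} (hab : |a| ≤ |b|) : Φ a ≤ Φ b := by
  have hmem : a ∈ segment ℝ (-|b|) |b| := by
    rw [segment_eq_Icc (neg_le_self (abs_nonneg b))]
    exact abs_le.1 hab
  simpa [heven, apply_abs_of_even heven] using
    hconv.le_on_segment (mem_univ _) (mem_univ _) hmem

theorem measurable_of_le_of_abs_le (hΦ : ∀ a b, |a| ≤ |b| → Φ a ≤ Φ b) :
    Measurable Φ := by
  have hmono : Monotone fun t => Φ (max t 0) := fun s t hst =>
    hΦ _ _ (by simpa [abs_of_nonneg] using max_le_max_right 0 hst)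
  have hfactor : Φ = (fun t => Φ (max t 0)) ∘ abs := funext fun y => by
    simp only [Function.comp, max_eq_left (abs_nonneg y)]
    exact le_antisymm (hΦ _ _ (abs_abs y).ge) (hΦ _ _ (abs_abs y).le)
  rw [hfactor]
  exact hmono.measurable.comp measurable_abs

end EvenConvex

section Complementary

def youngSet (Φ : ℝ → ℝ) (y : ℝ) : Set ℝ :=
  (fun x => x * |y| - Φ x) '' Ici 0

def complementary (Φ : ℝ → ℝ) (y : ℝ) : ℝ :=
  sSup (youngSet Φ y)

variable {Φ : ℝ → ℝ}

theorem bddAbove_youngSet (hnn : ∀ x, 0 ≤ Φ x)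
    (htop : Tendsto (fun x => Φ x / x) atTop atTop) (y : ℝ) : BddAbove (youngSet Φ y) := by
  obtain ⟨M, hM⟩ := eventually_atTop.1
    ((htop.eventually_ge_atTop |y|).and (eventually_gt_atTop 0))
  refine ⟨max M 0 * |y|, forall_mem_image.2 fun x hx => ?_⟩
  rcases le_or_gt M x with hMx | hxM
  · obtain ⟨hlarge, hxpos⟩ := hM x hMx
    have : x * |y| ≤ Φ x := by rwa [le_div_iff₀ hxpos, mul_comm] at hlarge
    nlinarith [abs_nonneg y, le_max_right M 0]
  · nlinarith [abs_nonneg y, le_max_left M 0, hnn x]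

theorem mul_abs_le_add_complementary (hbdd : ∀ y, BddAbove (youngSet Φ y)) {x : ℝ}
    (hx : 0 ≤ x) (y : ℝ) : x * |y| ≤ Φ x + complementary Φ y := by
  have := le_csSup (hbdd y) (mem_image_of_mem _ hx)
  rw [complementary]
  linarith

theorem abs_mul_abs_le_mul_add_complementary (hbdd : ∀ y, BddAbove (youngSet Φ y))
    (heven : ∀ x, Φ (-x) = Φ x) {k : ℝ} (hk : 0 < k) (d y : ℝ) :
    |d| * |y| ≤ k * (Φ (d / k) + complementary Φ y) := by
  have hyoung := mul_abs_le_add_complementary hbdd (abs_nonneg (d / k)) y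
  rw [apply_abs_of_even heven] at hyoung
  calc |d| * |y| = k * (|d / k| * |y|) := by rw [abs_div, abs_of_pos hk]; field_simp
    _ ≤ k * (Φ (d / k) + complementary Φ y) := by gcongr

theorem complementary_nonneg (hbdd : ∀ y, BddAbove (youngSet Φ y)) (hΦ0 : Φ 0 = 0) (y : ℝ) :
    0 ≤ complementary Φ y := by
  simpa [hΦ0] using mul_abs_le_add_complementary hbdd le_rfl y

theorem complementary_le_of_abs_le (hbdd : ∀ y, BddAbove (youngSet Φ y)) {a b : ℝ}
    (hab : |a| ≤ |b|) : complementary Φ a ≤ complementary Φ b :=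
  csSup_le (Nonempty.image _ nonempty_Ici) <| forall_mem_image.2 fun x hx =>
    le_csSup_of_le (hbdd b) (mem_image_of_mem _ hx) (by gcongr)

end Complementary

section Derivative

variable {Φ φ : ℝ → ℝ}

theorem sub_le_mul_of_eq_integral (hφ : MonotoneOn φ (Ici 0))
    (hder : ∀ x, Φ x = ∫ t in (0:ℝ)..|x|, φ t) {a b : ℝ} (hb : 0 ≤ b) (hba : b ≤ a) :
    Φ a - Φ b ≤ (a - b) * φ a := by
  have ha : 0 ≤ a := hb.trans hba
  have hint : ∀ c d : ℝ, 0 ≤ c → 0 ≤ d → IntervalIntegrable φ volume c d :=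
    fun c d hc hd => (hφ.mono fun t ht => le_trans (le_min hc hd) ht.1).intervalIntegrable
  rw [hder a, hder b, abs_of_nonneg ha, abs_of_nonneg hb,
    intervalIntegral.integral_interval_sub_left (hint 0 a le_rfl ha) (hint 0 b le_rfl hb)]
  calc ∫ t in b..a, φ t ≤ ∫ _ in b..a, φ a :=
        intervalIntegral.integral_mono_on hba (hint b a hb ha) intervalIntegrable_const
          fun t ht => hφ (hb.trans ht.1) ha ht.2
    _ = (a - b) * φ a := by simp

/- The hypotheses leave `φ 0` free (it may be negative), hence `|φ|` rather than `φ`. -/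
theorem abs_sub_le_mul_abs_add_abs (hmono : MonotoneOn Φ (Ici 0)) (hφ : MonotoneOn φ (Ici 0))
    (hder : ∀ x, Φ x = ∫ t in (0:ℝ)..|x|, φ t) {a b : ℝ} (ha : 0 ≤ a) (hb : 0 ≤ b) :
    |Φ a - Φ b| ≤ |a - b| * (|φ a| + |φ b|) := by
  wlog hba : b ≤ a generalizing a b
  · rw [abs_sub_comm, abs_sub_comm a, add_comm]
    exact this hb ha (le_of_not_ge hba)
  rw [abs_of_nonneg (sub_nonneg.2 (hmono hb ha hba)), abs_of_nonneg (sub_nonneg.2 hba)]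
  calc Φ a - Φ b ≤ (a - b) * φ a := sub_le_mul_of_eq_integral hφ hder hb hba
    _ ≤ (a - b) * (|φ a| + |φ b|) := by
      gcongr
      linarith [le_abs_self (φ a), abs_nonneg (φ b)]

end Derivative

theorem MonotoneOn.aemeasurable_comp_of_nonneg {Ω : Type*} [MeasurableSpace Ω]
    {μ : Measure Ω} {φ : ℝ → ℝ} {f : Ω → ℝ} (hφ : MonotoneOn φ (Ici 0))
    (hf : AEMeasurable f μ) (hf0 : ∀ x, 0 ≤ f x) : AEMeasurable (fun x => φ (f x)) μ := by
  have hmono : Monotone fun t => φ (max t 0) := fun s t hst =>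
    hφ (le_max_right s 0) (le_max_right t 0) (max_le_max_right 0 hst)
  refine (hmono.measurable.comp_aemeasurable hf).congr (ae_of_all _ fun x => ?_)
  simp [max_eq_left (hf0 x)]

namespace IsNFunction

variable {Φ φ : ℝ → ℝ}

theorem map_zero (hΦ : IsNFunction Φ) : Φ 0 = 0 :=
  (hΦ.2.2.1 0).2 rfl

theorem le_of_abs_le (hΦ : IsNFunction Φ) {a b : ℝ} (hab : |a| ≤ |b|) : Φ a ≤ Φ b :=
  le_of_abs_le_of_even_of_convexOn hΦ.1 hΦ.2.1 hab

theorem nonneg (hΦ : IsNFunction Φ) (x : ℝ) : 0 ≤ Φ x :=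
  hΦ.map_zero ▸ hΦ.le_of_abs_le (by simp)

theorem monotoneOn (hΦ : IsNFunction Φ) : MonotoneOn Φ (Ici 0) := fun a ha b hb hab =>
  hΦ.le_of_abs_le (by rwa [abs_of_nonneg ha, abs_of_nonneg hb])

theorem measurable (hΦ : IsNFunction Φ) : Measurable Φ :=
  measurable_of_le_of_abs_le fun _ _ => hΦ.le_of_abs_le

theorem bddAbove_youngSet (hΦ : IsNFunction Φ) (y : ℝ) : BddAbove (youngSet Φ y) :=
  _root_.bddAbove_youngSet hΦ.nonneg hΦ.2.2.2.2 y

theorem abs_sub_le_young (hΦ : IsNFunction Φ) (hφ : MonotoneOn φ (Ici 0))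
    (hder : ∀ x, Φ x = ∫ t in (0:ℝ)..|x|, φ t) {k a b : ℝ} (hk : 0 < k) (ha : 0 ≤ a)
    (hb : 0 ≤ b) :
    |Φ a - Φ b| ≤ k * (Φ ((a - b) / k) + complementary Φ (φ a)) +
      k * (Φ ((a - b) / k) + complementary Φ (φ b)) :=
  calc |Φ a - Φ b| ≤ |a - b| * (|φ a| + |φ b|) :=
        abs_sub_le_mul_abs_add_abs hΦ.monotoneOn hφ hder ha hb
    _ = |a - b| * |φ a| + |a - b| * |φ b| := mul_add _ _ _
    _ ≤ _ := add_le_add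
      (abs_mul_abs_le_mul_add_complementary hΦ.bddAbove_youngSet hΦ.1 hk _ _)
      (abs_mul_abs_le_mul_add_complementary hΦ.bddAbove_youngSet hΦ.1 hk _ _)

end IsNFunction

section Orlicz

variable {Ω : Type*} [MeasurableSpace Ω] {μ : Measure Ω} {Φ : ℝ → ℝ}

def GaugeAdmissible (μ : Measure Ω) (Φ : ℝ → ℝ) (f : Ω → ℝ) (k : ℝ) : Prop :=
  0 < k ∧ orliczModular μ Φ (fun x => f x / k) ≤ 1

theorem gaugeNorm_eq_sInf (f : Ω → ℝ) :
    gaugeNorm μ Φ f = sInf {k | GaugeAdmissible μ Φ f k} :=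
  rfl

theorem exists_gaugeAdmissible_of_gaugeNorm_ne_zero {f : Ω → ℝ} (h : gaugeNorm μ Φ f ≠ 0) :
    ∃ k, GaugeAdmissible μ Φ f k := by
  contrapose! h
  rw [gaugeNorm_eq_sInf, eq_empty_of_forall_notMem (s := {k | GaugeAdmissible μ Φ f k}) h,
    Real.sInf_empty]

theorem GaugeAdmissible.sub (heven : ∀ x, Φ (-x) = Φ x) (hconv : ConvexOn ℝ univ Φ)
    (hnn : ∀ x, 0 ≤ Φ x) (hmeas : Measurable Φ) {f g : Ω → ℝ} (hf : AEMeasurable f μ)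
    {k₁ k₂ : ℝ} (h₁ : GaugeAdmissible μ Φ f k₁) (h₂ : GaugeAdmissible μ Φ g k₂) :
    GaugeAdmissible μ Φ (fun x => f x - g x) (k₁ + k₂) := by
  obtain ⟨hk₁, hf₁⟩ := h₁
  obtain ⟨hk₂, hg₂⟩ := h₂
  have hk : 0 < k₁ + k₂ := add_pos hk₁ hk₂
  set t₁ := k₁ / (k₁ + k₂)
  set t₂ := k₂ / (k₁ + k₂)
  have ht₁ : 0 ≤ t₁ := by positivity
  have ht₂ : 0 ≤ t₂ := by positivity
  have ht : t₁ + t₂ = 1 := by simp only [t₁, t₂, ← add_div, div_self hk.ne']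
  have hpt : ∀ x, Φ ((f x - g x) / (k₁ + k₂)) ≤ t₁ * Φ (f x / k₁) + t₂ * Φ (g x / k₂) := by
    intro x
    have hsplit : (f x - g x) / (k₁ + k₂) = t₁ • (f x / k₁) + t₂ • (-(g x / k₂)) := by
      simp only [t₁, t₂, smul_eq_mul]
      field_simp
      ring
    simpa [hsplit, heven] using
      hconv.2 (mem_univ (f x / k₁)) (mem_univ (-(g x / k₂))) ht₁ ht₂ ht
  have hmf : AEMeasurable (fun x => ENNReal.ofReal (Φ (f x / k₁))) μ :=
    (hmeas.comp_aemeasurable (hf.div_const k₁)).ennreal_ofReal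
  refine ⟨hk, ?_⟩
  calc orliczModular μ Φ (fun x => (f x - g x) / (k₁ + k₂))
      ≤ ∫⁻ x, ENNReal.ofReal (t₁ * Φ (f x / k₁) + t₂ * Φ (g x / k₂)) ∂μ :=
        lintegral_mono fun x => ENNReal.ofReal_le_ofReal (hpt x)
    _ = ∫⁻ x, ENNReal.ofReal t₁ * ENNReal.ofReal (Φ (f x / k₁)) +
          ENNReal.ofReal t₂ * ENNReal.ofReal (Φ (g x / k₂)) ∂μ :=
      lintegral_congr fun x => by
        rw [ENNReal.ofReal_add (mul_nonneg ht₁ (hnn _)) (mul_nonneg ht₂ (hnn _)),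
          ENNReal.ofReal_mul ht₁, ENNReal.ofReal_mul ht₂]
    _ = ENNReal.ofReal t₁ * orliczModular μ Φ (fun x => f x / k₁) +
          ENNReal.ofReal t₂ * orliczModular μ Φ (fun x => g x / k₂) := by
      rw [lintegral_add_left' (hmf.const_mul _), lintegral_const_mul' _ _ ENNReal.ofReal_ne_top,
        lintegral_const_mul' _ _ ENNReal.ofReal_ne_top, orliczModular, orliczModular]
    _ ≤ ENNReal.ofReal t₁ * 1 + ENNReal.ofReal t₂ * 1 := by gcongr
    _ = 1 := by rw [mul_one, mul_one, ← ENNReal.ofReal_add ht₁ ht₂, ht, ENNReal.ofReal_one]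

theorem le_ofReal_mul_gaugeNorm {f : Ω → ℝ} {X : ℝ≥0∞} {C : ℝ} (hC : 0 ≤ C)
    (hne : ∃ k, GaugeAdmissible μ Φ f k)
    (h : ∀ k, GaugeAdmissible μ Φ f k → X ≤ ENNReal.ofReal (C * k)) :
    X ≤ ENNReal.ofReal (C * gaugeNorm μ Φ f) := by
  have hmono : Monotone fun k => ENNReal.ofReal (C * k) := fun a b hab =>
    ENNReal.ofReal_le_ofReal (mul_le_mul_of_nonneg_left hab hC)
  have hcont : Continuous fun k => ENNReal.ofReal (C * k) :=
    ENNReal.continuous_ofReal.comp (continuous_const.mul continuous_id)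
  rw [gaugeNorm_eq_sInf, hmono.map_csInf_of_continuousAt (A := {k | GaugeAdmissible μ Φ f k})
    hcont.continuousAt hne ⟨0, fun k hk => hk.1.le⟩]
  exact le_sInf (forall_mem_image.2 h)

theorem lintegral_young_le {Ψ : ℝ → ℝ} (hnn : ∀ x, 0 ≤ Φ x) (hΨnn : ∀ y, 0 ≤ Ψ y)
    (hmeas : Measurable Φ) {d u : Ω → ℝ} (hd : AEMeasurable d μ) {k S : ℝ}
    (hk : GaugeAdmissible μ Φ d k) (hu : orliczModular μ Ψ u ≤ ENNReal.ofReal S) (hS : 0 ≤ S) :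
    ∫⁻ x, ENNReal.ofReal (k * (Φ (d x / k) + Ψ (u x))) ∂μ ≤ ENNReal.ofReal (k * (1 + S)) := by
  have hmd : AEMeasurable (fun x => ENNReal.ofReal (Φ (d x / k))) μ :=
    (hmeas.comp_aemeasurable (hd.div_const k)).ennreal_ofReal
  simp_rw [ENNReal.ofReal_mul hk.1.le, ENNReal.ofReal_add (hnn _) (hΨnn _)]
  rw [lintegral_const_mul' _ _ ENNReal.ofReal_ne_top, lintegral_add_left' hmd,
    ENNReal.ofReal_add zero_le_one hS, ENNReal.ofReal_one]
  exact mul_le_mul_right (add_le_add hk.2 hu) _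

theorem IsNFunction.lintegral_abs_sub_le (hΦ : IsNFunction Φ) {φ : ℝ → ℝ}
    (hφ : MonotoneOn φ (Ici 0)) (hder : ∀ x, Φ x = ∫ t in (0:ℝ)..|x|, φ t) {f g : Ω → ℝ}
    (hf : AEMeasurable f μ) (hg : AEMeasurable g μ) (hf0 : ∀ x, 0 ≤ f x) (hg0 : ∀ x, 0 ≤ g x)
    {S k : ℝ} (hS : 0 ≤ S)
    (hΨf : orliczModular μ (complementary Φ) (fun x => φ (f x)) ≤ ENNReal.ofReal S)
    (hΨg : orliczModular μ (complementary Φ) (fun x => φ (g x)) ≤ ENNReal.ofReal S)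
    (hk : GaugeAdmissible μ Φ (fun x => f x - g x) k) :
    ∫⁻ x, ENNReal.ofReal |Φ (f x) - Φ (g x)| ∂μ ≤ ENNReal.ofReal (2 * (S + 1) * k) := by
  have hΨnn := complementary_nonneg hΦ.bddAbove_youngSet hΦ.map_zero
  have hΨmeas : Measurable (complementary Φ) :=
    measurable_of_le_of_abs_le fun _ _ => complementary_le_of_abs_le hΦ.bddAbove_youngSet
  have hfg := hf.sub hg
  have hmeas_f : AEMeasurable
      (fun x => ENNReal.ofReal (k * (Φ ((f x - g x) / k) + complementary Φ (φ (f x))))) μ :=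
    (((hΦ.measurable.comp_aemeasurable (hfg.div_const k)).add
      (hΨmeas.comp_aemeasurable (hφ.aemeasurable_comp_of_nonneg hf hf0))).const_mul
        k).ennreal_ofReal
  have hkS : 0 ≤ k * (1 + S) := mul_nonneg hk.1.le (by linarith)
  calc ∫⁻ x, ENNReal.ofReal |Φ (f x) - Φ (g x)| ∂μ
      ≤ ∫⁻ x, ENNReal.ofReal (k * (Φ ((f x - g x) / k) + complementary Φ (φ (f x)))) +
          ENNReal.ofReal (k * (Φ ((f x - g x) / k) + complementary Φ (φ (g x)))) ∂μ :=
        lintegral_mono fun x => (ENNReal.ofReal_le_ofReal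
          (hΦ.abs_sub_le_young hφ hder hk.1 (hf0 x) (hg0 x))).trans ENNReal.ofReal_add_le
    _ = _ := lintegral_add_left' hmeas_f _
    _ ≤ ENNReal.ofReal (k * (1 + S)) + ENNReal.ofReal (k * (1 + S)) :=
      add_le_add (lintegral_young_le hΦ.nonneg hΨnn hΦ.measurable hfg hk hΨf hS)
        (lintegral_young_le hΦ.nonneg hΨnn hΦ.measurable hfg hk hΨg hS)
    _ = ENNReal.ofReal (2 * (S + 1) * k) := by
      rw [← ENNReal.ofReal_add hkS hkS]
      ring_nf

end Orlicz

theorem modular_lipschitz_on_sphere_general {Ω : Type*} [MeasurableSpace Ω]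
    (μ : Measure Ω) (Φ φ Ψ : ℝ → ℝ) (hΦ : IsNFunction Φ)
    (hφmono : MonotoneOn φ (Set.Ici 0))
    (hder : ∀ x : ℝ, Φ x = ∫ t in (0:ℝ)..|x|, φ t)
    (hΨ : ∀ y : ℝ, Ψ y = sSup ((fun x => x * |y| - Φ x) '' Set.Ici (0:ℝ)))
    (S : ℝ) (hS : 0 ≤ S)
    (hSsup : ∀ v : Ω → ℝ, MemOrlicz μ Φ v → gaugeNorm μ Φ v ≤ 1 →
      orliczModular μ Ψ (fun x => φ |v x|) ≤ ENNReal.ofReal S)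
    (f g : Ω → ℝ) (hf : MemOrlicz μ Φ f) (hg : MemOrlicz μ Φ g)
    (hf0 : ∀ x, 0 ≤ f x) (hg0 : ∀ x, 0 ≤ g x)
    (hfn : gaugeNorm μ Φ f = 1) (hgn : gaugeNorm μ Φ g = 1) :
    ∫⁻ x, ENNReal.ofReal |Φ (f x) - Φ (g x)| ∂μ ≤
      ENNReal.ofReal (2 * (S + 1) * gaugeNorm μ Φ (fun x => f x - g x)) := by
  obtain rfl : Ψ = complementary Φ := funext hΨ
  have hΨf : orliczModular μ (complementary Φ) (fun x => φ (f x)) ≤ ENNReal.ofReal S := by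
    simpa only [abs_of_nonneg (hf0 _)] using hSsup f hf hfn.le
  have hΨg : orliczModular μ (complementary Φ) (fun x => φ (g x)) ≤ ENNReal.ofReal S := by
    simpa only [abs_of_nonneg (hg0 _)] using hSsup g hg hgn.le
  obtain ⟨kf, hkf⟩ := exists_gaugeAdmissible_of_gaugeNorm_ne_zero (hfn ▸ one_ne_zero)
  obtain ⟨kg, hkg⟩ := exists_gaugeAdmissible_of_gaugeNorm_ne_zero (hgn ▸ one_ne_zero)
  have hkfg := hkf.sub hΦ.1 hΦ.2.1 hΦ.nonneg hΦ.measurable hf.1 hkg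
  exact le_ofReal_mul_gaugeNorm (by positivity) ⟨_, hkfg⟩ fun k hk =>
    hΦ.lintegral_abs_sub_le hφmono hder hf.1 hg.1 hf0 hg0 hS hΨf hΨg hk

/-- Lipschitz estimate for f ↦ Φ∘f on the unit sphere of L^Φ:
if S bounds the conjugate modular of the derivative on the closed unit ball, and
f, g ≥ 0 have gauge norm 1, then ∫ |Φ(f) − Φ(g)| dμ ≤ 2(S+1)‖f − g‖_(Φ). -/
theorem modular_lipschitz_on_sphere {Ω : Type*} [MeasurableSpace Ω]
    (μ : Measure Ω) (Φ φ Ψ : ℝ → ℝ) (hΦ : IsNFunction Φ)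
    (hΔ2 : ∃ K > 2, ∀ x : ℝ, 0 ≤ x → Φ (2 * x) ≤ K * Φ x)
    (hφmono : MonotoneOn φ (Set.Ici 0))
    (hder : ∀ x : ℝ, Φ x = ∫ t in (0:ℝ)..|x|, φ t)
    (hΨ : ∀ y : ℝ, Ψ y = sSup ((fun x => x * |y| - Φ x) '' Set.Ici (0:ℝ)))
    (S : ℝ) (hS : 0 ≤ S)
    (hSsup : ∀ v : Ω → ℝ, MemOrlicz μ Φ v → gaugeNorm μ Φ v ≤ 1 →
      orliczModular μ Ψ (fun x => φ |v x|) ≤ ENNReal.ofReal S)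
    (f g : Ω → ℝ) (hf : MemOrlicz μ Φ f) (hg : MemOrlicz μ Φ g)
    (hf0 : ∀ x, 0 ≤ f x) (hg0 : ∀ x, 0 ≤ g x)
    (hfn : gaugeNorm μ Φ f = 1) (hgn : gaugeNorm μ Φ g = 1) :
    ∫⁻ x, ENNReal.ofReal |Φ (f x) - Φ (g x)| ∂μ ≤
      ENNReal.ofReal (2 * (S + 1) * gaugeNorm μ Φ (fun x => f x - g x)) :=
  modular_lipschitz_on_sphere_general μ Φ φ Ψ hΦ hφmono hder hΨ S hS hSsup f g hf hg hf0 hg0 hfn hgn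
end
end

section
/- Let G be a second countable locally compact group, H a closed subgroup, and Φ a Δ₂-regular N-function. If the left regular representation of H on L^Φ(G) almost has invariant vectors (for every compact F ⊆ H and ε > 0 there is f ∈ L^Φ(G) with ‖f‖_(Φ) = 1 and ‖λ_G(z)f − f‖_(Φ) ≤ ε for all z ∈ F), then H satisfies Reiter's condition (P₁): for every compact F ⊆ H and ε > 0 there exists U ∈ L¹(H), U ≥ 0, ‖U‖_{L¹(H)} = 1, with ‖λ_H(z)U − U‖_{L¹(H)} < ε for all z ∈ F. -/
open MeasureTheory Filter
open scoped ENNReal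

noncomputable section

/-! Convexity and the Δ₂-condition give, for `0 < s ≤ 1/2`,
`|Φ a - Φ b| ≤ s K (Φ a + Φ b) + s Φ ((a - b) / s)`. Since `‖λ(z) f - f‖_(Φ) < s` forces
`∫ Φ ((λ(z) f - f) / s) ≤ 1`, and `1/K < ∫ Φ(f) ≤ K` when `‖f‖_(Φ) = 1`, the Mazur-type map
`f ↦ Φ ∘ f / ∫ Φ ∘ f` sends an almost `F`-invariant unit vector of `L^Φ(G)` to a probability
density `g` on `G` with `‖λ(z) g - g‖₁ ≤ 3 s K` for `z ∈ F`.

To pass from `G` to the closed subgroup `H`, average against a Bruhat function, a measurable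
`β ≥ 0` with `∫_H β(h⁻¹ y) dh = 1` for every `y`: `U(h) = ∫_G g(h y) β(y) dy`. By Tonelli
`∫_H U = ∫_G g = 1` and `‖λ_H(z) U - U‖₁ ≤ ‖λ_G(z) g - g‖₁`. -/

section NFunction

variable {Φ : ℝ → ℝ} {K s : ℝ}
  (heven : ∀ x, Φ (-x) = Φ x) (hconv : ConvexOn ℝ Set.univ Φ) (h0 : Φ 0 = 0)
  (hΔ : ∀ x, 0 ≤ x → Φ (2 * x) ≤ K * Φ x) (hK : 0 ≤ K)

include hconv in
theorem continuous_of_convexOn_univ : Continuous Φ :=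
  continuousOn_univ.1 (hconv.continuousOn isOpen_univ)

include heven hconv h0 in
theorem phi_nonneg (x : ℝ) : 0 ≤ Φ x := by
  have := hconv.2 (Set.mem_univ x) (Set.mem_univ (-x)) (by norm_num : (0 : ℝ) ≤ 1 / 2)
    (by norm_num : (0 : ℝ) ≤ 1 / 2) (by norm_num)
  simp only [smul_eq_mul, heven] at this
  rw [show 1 / 2 * x + 1 / 2 * -x = 0 by ring, h0] at this
  linarith

include hconv h0 in
theorem phi_mul_le {t : ℝ} (ht0 : 0 ≤ t) (ht1 : t ≤ 1) (x : ℝ) : Φ (t * x) ≤ t * Φ x := by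
  simpa [h0] using hconv.2 (Set.mem_univ 0) (Set.mem_univ x) (sub_nonneg.2 ht1) ht0 (by ring)

include heven hconv h0 in
theorem phi_div_le_phi_div {k k' : ℝ} (hk : 0 < k) (hkk' : k ≤ k') (y : ℝ) :
    Φ (y / k') ≤ Φ (y / k) := by
  have hk' : 0 < k' := hk.trans_le hkk'
  calc Φ (y / k') = Φ (k / k' * (y / k)) := by field_simp
    _ ≤ k / k' * Φ (y / k) := phi_mul_le hconv h0 (by positivity) ((div_le_one hk').2 hkk') _
    _ ≤ Φ (y / k) :=
      mul_le_of_le_one_left (phi_nonneg heven hconv h0 _) ((div_le_one hk').2 hkk')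

include heven hΔ in
theorem phi_two_mul_le (x : ℝ) : Φ (2 * x) ≤ K * Φ x := by
  rcases le_total 0 x with hx | hx
  · exact hΔ x hx
  · simpa [heven] using hΔ (-x) (neg_nonneg.2 hx)

include heven hconv h0 hΔ in
/-- Writing `b + d = (1 - s) • (r * b) + s • (d / s)` with `r = (1 - s)⁻¹ ∈ [1, 2]`, the term
`Φ (r * b)` is interpolated between `Φ b` and `Φ (2 * b) ≤ K * Φ b`. -/
theorem phi_add_le (hs0 : 0 < s) (hs : s ≤ 1 / 2) (b d : ℝ) :
    Φ (b + d) ≤ (1 + s * K) * Φ b + s * Φ (d / s) := by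
  set r := (1 - s)⁻¹
  have hcoef : (1 - s) * r = 1 := mul_inv_cancel₀ (by linarith)
  have hr1 : 1 ≤ r := one_le_inv₀ (by linarith) |>.2 (by linarith)
  have hr2 : r ≤ 2 := inv_le_of_inv_le₀ (by norm_num) (by linarith)
  have hsplit : Φ (b + d) ≤ (1 - s) * Φ (r * b) + s * Φ (d / s) := by
    have := hconv.2 (Set.mem_univ (r * b)) (Set.mem_univ (d / s))
      (show 0 ≤ 1 - s by linarith) hs0.le (by ring)
    simp only [smul_eq_mul] at this
    rwa [← mul_assoc, hcoef, one_mul, mul_div_cancel₀ _ hs0.ne'] at this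
  have hrb : Φ (r * b) ≤ (2 - r) * Φ b + (r - 1) * Φ (2 * b) := by
    have := hconv.2 (Set.mem_univ b) (Set.mem_univ (2 * b))
      (show 0 ≤ 2 - r by linarith) (show 0 ≤ r - 1 by linarith) (by ring)
    simp only [smul_eq_mul] at this
    rwa [show (2 - r) * b + (r - 1) * (2 * b) = r * b by ring] at this
  have h2b := phi_two_mul_le heven hΔ b
  calc Φ (b + d) ≤ (1 - s) * ((2 - r) * Φ b + (r - 1) * (K * Φ b)) + s * Φ (d / s) := by
        have := mul_le_mul_of_nonneg_left h2b (by linarith : 0 ≤ r - 1)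
        nlinarith
    _ = (1 - 2 * s + s * K) * Φ b + s * Φ (d / s) := by
        linear_combination (K * Φ b - Φ b) * hcoef
    _ ≤ (1 + s * K) * Φ b + s * Φ (d / s) := by
        nlinarith [phi_nonneg heven hconv h0 b]

include heven hconv h0 hΔ hK in
theorem abs_phi_sub_phi_le (hs0 : 0 < s) (hs : s ≤ 1 / 2) (a b : ℝ) :
    |Φ a - Φ b| ≤ s * K * (Φ a + Φ b) + s * Φ ((a - b) / s) := by
  have hab := phi_add_le heven hconv h0 hΔ hs0 hs b (a - b)
  have hba := phi_add_le heven hconv h0 hΔ hs0 hs a (b - a)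
  rw [add_sub_cancel] at hab hba
  rw [show (b - a) / s = -((a - b) / s) by ring, heven] at hba
  have ha := mul_nonneg (mul_nonneg hs0.le hK) (phi_nonneg heven hconv h0 a)
  have hb := mul_nonneg (mul_nonneg hs0.le hK) (phi_nonneg heven hconv h0 b)
  rw [abs_le]
  constructor <;> nlinarith

end NFunction

section Modular

variable {Ω : Type*} [MeasurableSpace Ω] {μ : Measure Ω} {Φ : ℝ → ℝ} {K s : ℝ}
  (heven : ∀ x, Φ (-x) = Φ x) (hconv : ConvexOn ℝ Set.univ Φ) (h0 : Φ 0 = 0)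
  (hΔ : ∀ x, 0 ≤ x → Φ (2 * x) ≤ K * Φ x) (hK : 0 ≤ K)

theorem orliczModular_congr_ae {f g : Ω → ℝ} (h : f =ᵐ[μ] g) :
    orliczModular μ Φ f = orliczModular μ Φ g :=
  lintegral_congr_ae (h.fun_comp fun t => ENNReal.ofReal (Φ t))

theorem gaugeNorm_congr_ae {f g : Ω → ℝ} (h : f =ᵐ[μ] g) :
    gaugeNorm μ Φ f = gaugeNorm μ Φ g := by
  have hk (k : ℝ) : orliczModular μ Φ (fun x => f x / k) = orliczModular μ Φ (fun x => g x / k) :=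
    orliczModular_congr_ae (h.fun_comp (· / k))
  simp only [gaugeNorm, hk]

theorem bddBelow_setOf_orliczModular_div_le_one (f : Ω → ℝ) :
    BddBelow {k : ℝ | 0 < k ∧ orliczModular μ Φ (fun x => f x / k) ≤ 1} :=
  ⟨0, fun _ hk => hk.1.le⟩

include heven hΔ hK in
theorem orliczModular_two_mul_le (f : Ω → ℝ) :
    orliczModular μ Φ (fun x => 2 * f x) ≤ ENNReal.ofReal K * orliczModular μ Φ f := by
  rw [orliczModular, orliczModular, ← lintegral_const_mul' _ _ ENNReal.ofReal_ne_top]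
  refine lintegral_mono fun x => ?_
  rw [← ENNReal.ofReal_mul hK]
  exact ENNReal.ofReal_le_ofReal (phi_two_mul_le heven hΔ _)

include heven hconv h0 in
theorem orliczModular_div_le_one_of_gaugeNorm_lt {f : Ω → ℝ} {k : ℝ} (hk : 0 < k)
    (hfk : orliczModular μ Φ (fun x => f x / k) ≤ 1) (hs : gaugeNorm μ Φ f < s) :
    orliczModular μ Φ (fun x => f x / s) ≤ 1 := by
  obtain ⟨k', ⟨hk', hfk'⟩, hk's⟩ :=
    (csInf_lt_iff (bddBelow_setOf_orliczModular_div_le_one f) ⟨k, hk, hfk⟩).1 hs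
  refine le_trans (lintegral_mono fun x => ENNReal.ofReal_le_ofReal ?_) hfk'
  exact phi_div_le_phi_div heven hconv h0 hk' hk's.le (f x)

theorem one_lt_orliczModular_div_of_lt_gaugeNorm {f : Ω → ℝ} (hs0 : 0 < s)
    (hs : s < gaugeNorm μ Φ f) : 1 < orliczModular μ Φ (fun x => f x / s) :=
  not_le.1 fun h => (csInf_le (bddBelow_setOf_orliczModular_div_le_one f) ⟨hs0, h⟩).not_gt hs

include heven hconv h0 hΔ hK in
theorem orliczModular_bounds_of_gaugeNorm_eq_one {f : Ω → ℝ} (hf : gaugeNorm μ Φ f = 1) :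
    orliczModular μ Φ (fun x => f x / 2) ≤ 1 ∧ orliczModular μ Φ f ≤ ENNReal.ofReal K ∧
      1 < ENNReal.ofReal K * orliczModular μ Φ f := by
  -- the defining set is nonempty, since otherwise `gaugeNorm μ Φ f = sInf ∅ = 0`
  obtain ⟨k, hk, hfk⟩ : {k : ℝ | 0 < k ∧ orliczModular μ Φ (fun x => f x / k) ≤ 1}.Nonempty := by
    by_contra hempty
    rw [Set.not_nonempty_iff_eq_empty] at hempty
    simp [gaugeNorm, hempty] at hf
  have hhalf := orliczModular_div_le_one_of_gaugeNorm_lt heven hconv h0 hk hfk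
    (hf.trans_lt one_lt_two)
  refine ⟨hhalf, ?_, ?_⟩
  · calc orliczModular μ Φ f = orliczModular μ Φ (fun x => 2 * (f x / 2)) := by
          simp only [mul_div_cancel₀ _ (two_ne_zero' ℝ)]
      _ ≤ ENNReal.ofReal K * 1 :=
          (orliczModular_two_mul_le heven hΔ hK _).trans (mul_le_mul_right hhalf _)
      _ = ENNReal.ofReal K := mul_one _
  · calc 1 < orliczModular μ Φ (fun x => f x / (1 / 2)) :=
          one_lt_orliczModular_div_of_lt_gaugeNorm one_half_pos (by rw [hf]; norm_num)
      _ = orliczModular μ Φ (fun x => 2 * f x) := by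
          congr 1 with x
          ring
      _ ≤ ENNReal.ofReal K * orliczModular μ Φ f := orliczModular_two_mul_le heven hΔ hK f

include heven hconv in
theorem orliczModular_sub_div_le_one {f g : Ω → ℝ} (hf : AEMeasurable f μ) {a : ℝ}
    (hfa : orliczModular μ Φ (fun x => f x / a) ≤ 1)
    (hga : orliczModular μ Φ (fun x => g x / a) ≤ 1) :
    orliczModular μ Φ (fun x => (f x - g x) / (2 * a)) ≤ 1 := by
  have hpt : ∀ x, ENNReal.ofReal (Φ ((f x - g x) / (2 * a))) ≤
      ENNReal.ofReal (1 / 2) * ENNReal.ofReal (Φ (f x / a)) +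
        ENNReal.ofReal (1 / 2) * ENNReal.ofReal (Φ (g x / a)) := by
    intro x
    have := hconv.2 (Set.mem_univ (f x / a)) (Set.mem_univ (-(g x / a)))
      (show (0 : ℝ) ≤ 1 / 2 by norm_num) (show (0 : ℝ) ≤ 1 / 2 by norm_num) (by norm_num)
    simp only [smul_eq_mul, heven] at this
    rw [show 1 / 2 * (f x / a) + 1 / 2 * -(g x / a) = (f x - g x) / (2 * a) by ring] at this
    rw [← ENNReal.ofReal_mul (by norm_num), ← ENNReal.ofReal_mul (by norm_num)]
    exact (ENNReal.ofReal_le_ofReal this).trans ENNReal.ofReal_add_le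
  have hfm : AEMeasurable (fun x => ENNReal.ofReal (1 / 2) * ENNReal.ofReal (Φ (f x / a))) μ :=
    ((continuous_of_convexOn_univ hconv).measurable.comp_aemeasurable
      (hf.div_const a)).ennreal_ofReal.const_mul _
  calc orliczModular μ Φ (fun x => (f x - g x) / (2 * a))
      ≤ ENNReal.ofReal (1 / 2) * orliczModular μ Φ (fun x => f x / a) +
          ENNReal.ofReal (1 / 2) * orliczModular μ Φ (fun x => g x / a) := by
        rw [orliczModular, orliczModular, orliczModular,
          ← lintegral_const_mul' _ _ ENNReal.ofReal_ne_top,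
          ← lintegral_const_mul' _ _ ENNReal.ofReal_ne_top, ← lintegral_add_left' hfm]
        exact lintegral_mono hpt
    _ ≤ ENNReal.ofReal (1 / 2) * 1 + ENNReal.ofReal (1 / 2) * 1 := by gcongr
    _ = 1 := by rw [mul_one, ← ENNReal.ofReal_add (by norm_num) (by norm_num)]; norm_num

include heven hconv h0 hΔ hK in
theorem lintegral_abs_phi_sub_le (hs0 : 0 < s) (hs : s ≤ 1 / 2) {f g : Ω → ℝ}
    (hf : AEMeasurable f μ) (hg : AEMeasurable g μ)
    (hfg : orliczModular μ Φ (fun x => (f x - g x) / s) ≤ 1) :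
    ∫⁻ x, ENNReal.ofReal |Φ (f x) - Φ (g x)| ∂μ ≤
      ENNReal.ofReal (s * K) * (orliczModular μ Φ f + orliczModular μ Φ g) + ENNReal.ofReal s := by
  have hΦ := (continuous_of_convexOn_univ hconv).measurable
  have hnn := phi_nonneg heven hconv h0
  calc ∫⁻ x, ENNReal.ofReal |Φ (f x) - Φ (g x)| ∂μ
      ≤ ∫⁻ x, ENNReal.ofReal (s * K) * (ENNReal.ofReal (Φ (f x)) + ENNReal.ofReal (Φ (g x))) +
          ENNReal.ofReal s * ENNReal.ofReal (Φ ((f x - g x) / s)) ∂μ := by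
        refine lintegral_mono fun x => ?_
        rw [← ENNReal.ofReal_add (hnn _) (hnn _), ← ENNReal.ofReal_mul (by positivity),
          ← ENNReal.ofReal_mul hs0.le,
          ← ENNReal.ofReal_add (by have := hnn (f x); have := hnn (g x); positivity)
            (mul_nonneg hs0.le (hnn _))]
        exact ENNReal.ofReal_le_ofReal (abs_phi_sub_phi_le heven hconv h0 hΔ hK hs0 hs _ _)
    _ = ENNReal.ofReal (s * K) * (orliczModular μ Φ f + orliczModular μ Φ g) +
          ENNReal.ofReal s * orliczModular μ Φ (fun x => (f x - g x) / s) := by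
        rw [lintegral_add_left' (by fun_prop), lintegral_const_mul' _ _ ENNReal.ofReal_ne_top,
          lintegral_const_mul' _ _ ENNReal.ofReal_ne_top, lintegral_add_left' (by fun_prop)]
        rfl
    _ ≤ _ := by gcongr; exact mul_le_of_le_one_right' hfg

end Modular

section Group

variable {G : Type*} [Group G] [MeasurableSpace G] [MeasurableMul G] {μ : Measure G}
  [μ.IsMulLeftInvariant] {Φ : ℝ → ℝ} {K s : ℝ}
  (heven : ∀ x, Φ (-x) = Φ x) (hconv : ConvexOn ℝ Set.univ Φ) (h0 : Φ 0 = 0)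
  (hΔ : ∀ x, 0 ≤ x → Φ (2 * x) ≤ K * Φ x) (hK : 0 ≤ K)

theorem orliczModular_comp_mul_left (f : G → ℝ) (z : G) :
    orliczModular μ Φ (fun x => f (z * x)) = orliczModular μ Φ f :=
  lintegral_mul_left_eq_self (fun x => ENNReal.ofReal (Φ (f x))) z

theorem gaugeNorm_comp_mul_left_sub_congr_ae {f f' : G → ℝ} (h : f =ᵐ[μ] f') (z : G) :
    gaugeNorm μ Φ (fun x => f (z * x) - f x) = gaugeNorm μ Φ (fun x => f' (z * x) - f' x) := by
  refine gaugeNorm_congr_ae ?_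
  have hz : (fun x => f (z * x)) =ᵐ[μ] fun x => f' (z * x) :=
    (measurePreserving_mul_left μ z).quasiMeasurePreserving.ae_eq_comp h
  filter_upwards [hz, h] with x hzx hx
  rw [hzx, hx]

include heven hconv h0 hΔ hK in
theorem lintegral_abs_phi_comp_mul_left_sub_le (hs0 : 0 < s) (hs : s ≤ 1 / 2) {f : G → ℝ}
    (hf : AEMeasurable f μ) (hf1 : gaugeNorm μ Φ f = 1) {z : G}
    (hz : gaugeNorm μ Φ (fun x => f (z * x) - f x) < s) :
    ∫⁻ x, ENNReal.ofReal |Φ (f (z * x)) - Φ (f x)| ∂μ ≤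
      ENNReal.ofReal (s * K) * (2 * orliczModular μ Φ f) + ENNReal.ofReal s := by
  have hfz : AEMeasurable (fun x => f (z * x)) μ :=
    hf.comp_quasiMeasurePreserving (measurePreserving_mul_left μ z).quasiMeasurePreserving
  have hhalf := (orliczModular_bounds_of_gaugeNorm_eq_one heven hconv h0 hΔ hK hf1).1
  have hhalf_z : orliczModular μ Φ (fun x => f (z * x) / 2) ≤ 1 :=
    (orliczModular_comp_mul_left (fun x => f x / 2) z).trans_le hhalf
  -- `2 * 2` lies in the set defining the gauge norm of `f (z * ·) - f`; were that set empty,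
  -- the gauge norm would be the junk value `sInf ∅ = 0` and `hz` would say nothing
  have h4 := orliczModular_sub_div_le_one heven hconv hfz hhalf_z hhalf
  calc ∫⁻ x, ENNReal.ofReal |Φ (f (z * x)) - Φ (f x)| ∂μ
      ≤ ENNReal.ofReal (s * K) * (orliczModular μ Φ (fun x => f (z * x)) + orliczModular μ Φ f) +
          ENNReal.ofReal s :=
        lintegral_abs_phi_sub_le heven hconv h0 hΔ hK hs0 hs hfz hf
          (orliczModular_div_le_one_of_gaugeNorm_lt heven hconv h0 (by norm_num) h4 hz)
    _ = _ := by rw [orliczModular_comp_mul_left, two_mul]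

include heven hconv h0 hΔ hK in
theorem exists_density_of_gaugeNorm_eq_one (hs0 : 0 < s) (hs : s ≤ 1 / 2) {f : G → ℝ}
    (hf : Measurable f) (hf1 : gaugeNorm μ Φ f = 1) :
    ∃ g : G → ℝ, Measurable g ∧ ∫⁻ x, ENNReal.ofReal (g x) ∂μ = 1 ∧
      ∀ z : G, gaugeNorm μ Φ (fun x => f (z * x) - f x) < s →
        ∫⁻ x, ENNReal.ofReal |g (z * x) - g x| ∂μ ≤ ENNReal.ofReal (3 * s * K) := by
  obtain ⟨-, hρK, hKρ⟩ := orliczModular_bounds_of_gaugeNorm_eq_one heven hconv h0 hΔ hK hf1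
  set c := (orliczModular μ Φ f).toReal
  have hρc : orliczModular μ Φ f = ENNReal.ofReal c :=
    (ENNReal.ofReal_toReal (ne_top_of_le_ne_top ENNReal.ofReal_ne_top hρK)).symm
  rw [hρc, ← ENNReal.ofReal_mul hK, ENNReal.one_lt_ofReal] at hKρ
  have hc : 0 < c := pos_of_mul_pos_right (one_pos.trans hKρ) hK
  have hdiv (w : G → ℝ) : ∫⁻ x, ENNReal.ofReal (w x / c) ∂μ =
      (∫⁻ x, ENNReal.ofReal (w x) ∂μ) * ENNReal.ofReal c⁻¹ := by
    simp_rw [div_eq_mul_inv, ENNReal.ofReal_mul' (inv_nonneg.2 hc.le)]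
    exact lintegral_mul_const' _ _ ENNReal.ofReal_ne_top
  refine ⟨fun x => Φ (f x) / c,
    ((continuous_of_convexOn_univ hconv).measurable.comp hf).div_const c, ?_, fun z hz => ?_⟩
  · rw [hdiv, ← orliczModular, hρc, ← ENNReal.ofReal_mul hc.le, mul_inv_cancel₀ hc.ne',
      ENNReal.ofReal_one]
  · simp_rw [← sub_div, abs_div, abs_of_pos hc]
    calc (∫⁻ x, ENNReal.ofReal (|Φ (f (z * x)) - Φ (f x)| / c) ∂μ)
        ≤ (ENNReal.ofReal (s * K) * (2 * ENNReal.ofReal c) + ENNReal.ofReal s) *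
            ENNReal.ofReal c⁻¹ := by
          rw [hdiv, ← hρc]
          gcongr
          exact lintegral_abs_phi_comp_mul_left_sub_le heven hconv h0 hΔ hK hs0 hs
            hf.aemeasurable hf1 hz
      _ = ENNReal.ofReal ((s * K * (2 * c) + s) * c⁻¹) := by
          rw [ENNReal.ofReal_mul (by positivity : 0 ≤ s * K * (2 * c) + s),
            ENNReal.ofReal_add (by positivity) hs0.le,
            ENNReal.ofReal_mul (by positivity : 0 ≤ s * K), ENNReal.ofReal_mul zero_le_two,
            ENNReal.ofReal_ofNat]
      _ ≤ ENNReal.ofReal (3 * s * K) := by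
          refine ENNReal.ofReal_le_ofReal ?_
          rw [add_mul, mul_assoc, mul_assoc 2, mul_inv_cancel₀ hc.ne']
          have : s * c⁻¹ ≤ s * K := by
            gcongr
            exact (inv_le_iff_one_le_mul₀ hc).2 hKρ.le
          linarith

end Group

section Subgroup

open scoped Pointwise

variable {G : Type*} [Group G] [TopologicalSpace G] [IsTopologicalGroup G] [MeasurableSpace G]
  [BorelSpace G] {H : Subgroup G} {μH : Measure H}

theorem measure_preimage_inv_mul_le [μH.IsMulLeftInvariant] (A : Set G) (y : G) :
    μH ((fun h : H => (h : G)⁻¹ * y) ⁻¹' A) ≤ μH ((↑) ⁻¹' (A * A⁻¹)) := by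
  rcases Set.eq_empty_or_nonempty ((fun h : H => (h : G)⁻¹ * y) ⁻¹' A) with hS | ⟨h₀, hh₀⟩
  · simp [hS]
  calc μH ((fun h : H => (h : G)⁻¹ * y) ⁻¹' A)
      ≤ μH ((fun h => h₀⁻¹ * h) ⁻¹' ((↑) ⁻¹' (A * A⁻¹))) := measure_mono fun h hh => by
        simpa [mul_assoc] using Set.mul_mem_mul (show (h₀ : G)⁻¹ * y ∈ A from hh₀)
          (Set.inv_mem_inv.2 (show (h : G)⁻¹ * y ∈ A from hh))
    _ = μH ((↑) ⁻¹' (A * A⁻¹)) := measure_preimage_mul μH h₀⁻¹ _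

theorem exists_measurable_pos_lintegral_subgroup_lt_top [SecondCountableTopology G]
    [LocallyCompactSpace G] (hH : IsClosed (H : Set G)) (μH : Measure H) [μH.IsHaarMeasure] :
    ∃ ψ : G → ℝ≥0∞, Measurable ψ ∧ ∀ y,
      0 < ∫⁻ h, ψ ((h : G)⁻¹ * y) ∂μH ∧ ∫⁻ h, ψ ((h : G)⁻¹ * y) ∂μH < ⊤ := by
  obtain ⟨C, hC, hC1⟩ := exists_compact_mem_nhds (1 : G)
  obtain ⟨u, hu⟩ := TopologicalSpace.exists_dense_seq G
  -- `ψ = ∑ 2⁻ⁿ 𝟙_{W n}` for the right translates `W n = interior C * u n`, which cover `G`;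
  -- a coset `H y` meets `W n` in a set of measure at most `μH (H ∩ C * C⁻¹)`.
  set W : ℕ → Set G := fun n => (· * (u n)⁻¹) ⁻¹' interior C
  have hW : ∀ n, IsOpen (W n) := fun n => isOpen_interior.preimage (continuous_mul_const _)
  have hW_cover : ∀ y, ∃ n, y ∈ W n := fun y =>
    hu.exists_mem_open (isOpen_interior.preimage (continuous_const.mul continuous_inv))
      ⟨y, by simpa [mem_interior_iff_mem_nhds] using hC1⟩
  have hW_sub : ∀ n, W n * (W n)⁻¹ ⊆ C * C⁻¹ := by
    rintro n _ ⟨a, ha, b, hb, rfl⟩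
    simpa [mul_assoc] using Set.mul_mem_mul (interior_subset ha)
      (Set.inv_mem_inv.2 (interior_subset hb))
  set ψ : G → ℝ≥0∞ := fun y => ∑' n, (W n).indicator (fun _ => 2⁻¹ ^ n) y
  have hψ : Measurable ψ :=
    Measurable.tsum fun n => measurable_const.indicator (hW n).measurableSet
  have hψ_pos : ∀ y, 0 < ψ y := fun y => by
    obtain ⟨n, hn⟩ := hW_cover y
    refine lt_of_lt_of_le ?_ (ENNReal.le_tsum n)
    simpa [Set.indicator_of_mem hn] using ENNReal.pow_pos (ENNReal.inv_pos.2 ENNReal.ofNat_ne_top) n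
  refine ⟨ψ, hψ, fun y => ?_⟩
  have hmeas : Measurable fun h : H => (h : G)⁻¹ * y := by fun_prop
  refine ⟨?_, ?_⟩
  · rw [lintegral_pos_iff_support (f := fun h : H => ψ ((h : G)⁻¹ * y)) (hψ.comp hmeas),
      Function.support_eq_univ fun h => (hψ_pos _).ne']
    exact Measure.measure_univ_pos.2 (NeZero.ne μH)
  · change ∫⁻ h, ∑' n, (W n).indicator (fun _ => 2⁻¹ ^ n) ((h : G)⁻¹ * y) ∂μH < ⊤
    rw [lintegral_tsum fun n => ?_]
    swap
    · exact ((measurable_const.indicator (hW n).measurableSet).comp hmeas).aemeasurable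
    simp_rw [lintegral_indicator_const_comp hmeas (hW _).measurableSet]
    calc ∑' n, 2⁻¹ ^ n * μH ((fun h : H => (h : G)⁻¹ * y) ⁻¹' W n)
        ≤ ∑' n : ℕ, 2⁻¹ ^ n * μH ((↑) ⁻¹' (C * C⁻¹)) := ENNReal.tsum_le_tsum fun n =>
          mul_le_mul_right ((measure_preimage_inv_mul_le _ y).trans
            (measure_mono (Set.preimage_mono (hW_sub n)))) _
      _ = 2 * μH ((↑) ⁻¹' (C * C⁻¹)) := by
          rw [ENNReal.tsum_mul_right, ENNReal.tsum_geometric, ENNReal.one_sub_inv_two, inv_inv]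
      _ < ⊤ := ENNReal.mul_lt_top ENNReal.ofNat_lt_top
          (hH.isClosedEmbedding_subtypeVal.isCompact_preimage (hC.mul hC.inv)).measure_lt_top

theorem sigmaFinite_of_isClosed [SecondCountableTopology G] [LocallyCompactSpace G]
    (hH : IsClosed (H : Set G)) (μH : Measure H) [μH.IsHaarMeasure] : SigmaFinite μH := by
  have : LocallyCompactSpace H := hH.isClosedEmbedding_subtypeVal.locallyCompactSpace
  have : SecondCountableTopology H := TopologicalSpace.Subtype.secondCountableTopology (H : Set G)
  have : BorelSpace H := Subtype.borelSpace _
  infer_instance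

theorem exists_bruhat_function [SecondCountableTopology G] [LocallyCompactSpace G]
    (hH : IsClosed (H : Set G)) (μH : Measure H) [μH.IsHaarMeasure] :
    ∃ β : G → ℝ≥0∞, Measurable β ∧ ∀ y, ∫⁻ h, β ((h : G)⁻¹ * y) ∂μH = 1 := by
  have : SigmaFinite μH := sigmaFinite_of_isClosed hH μH
  obtain ⟨ψ, hψ, hT⟩ := exists_measurable_pos_lintegral_subgroup_lt_top hH μH
  set T : G → ℝ≥0∞ := fun y => ∫⁻ h, ψ ((h : G)⁻¹ * y) ∂μH
  have hTm : Measurable T :=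
    Measurable.lintegral_prod_right' (f := fun p : G × H => ψ ((p.2 : G)⁻¹ * p.1))
      (hψ.comp (by fun_prop))
  have hT_inv (h : H) (y : G) : T ((h : G)⁻¹ * y) = T y := by
    simpa [mul_assoc] using lintegral_mul_left_eq_self (fun k : H => ψ ((k : G)⁻¹ * y)) h
  refine ⟨fun y => ψ y / T y, hψ.div hTm, fun y => ?_⟩
  simp_rw [hT_inv, div_eq_mul_inv]
  rw [lintegral_mul_const' _ _ (ENNReal.inv_ne_top.2 (hT y).1.ne'),
    ENNReal.mul_inv_cancel (hT y).1.ne' (hT y).2.ne]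

end Subgroup

theorem abs_toReal_sub_toReal_le {a b d : ℝ≥0∞} (hd : d ≠ ⊤) (hab : a ≤ b + d)
    (hba : b ≤ a + d) : |a.toReal - b.toReal| ≤ d.toReal := by
  have ha := ENNReal.toReal_le_add' hab (fun hb => by simpa [hb, hd] using hba) (absurd · hd)
  have hb := ENNReal.toReal_le_add' hba (fun ha => by simpa [ha, hd] using hab) (absurd · hd)
  rw [abs_sub_le_iff]
  constructor <;> linarith

theorem integral_abs_toReal_sub_toReal_lt {α : Type*} [MeasurableSpace α] {μ : Measure α}
    {a b d : α → ℝ≥0∞} (hd : Measurable d) (hab : ∀ x, a x ≤ b x + d x)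
    (hba : ∀ x, b x ≤ a x + d x) {ε : ℝ} (hdε : ∫⁻ x, d x ∂μ < ENNReal.ofReal ε) :
    ∫ x, |(a x).toReal - (b x).toReal| ∂μ < ε := by
  have hfin : ∫⁻ x, d x ∂μ ≠ ⊤ := (hdε.trans ENNReal.ofReal_lt_top).ne
  calc ∫ x, |(a x).toReal - (b x).toReal| ∂μ ≤ ∫ x, (d x).toReal ∂μ :=
        integral_mono_of_nonneg (ae_of_all _ fun _ => abs_nonneg _)
          (integrable_toReal_of_lintegral_ne_top hd.aemeasurable hfin)
          ((ae_lt_top hd hfin).mono fun x hx => abs_toReal_sub_toReal_le hx.ne (hab x) (hba x))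
    _ = (∫⁻ x, d x ∂μ).toReal := integral_toReal hd.aemeasurable (ae_lt_top hd hfin)
    _ < ε := ENNReal.toReal_lt_of_lt_ofReal hdε

section Transfer

variable {G : Type*} [Group G] [MeasurableSpace G] [MeasurableMul₂ G] [MeasurableInv G]
  {H : Subgroup G} {μG : Measure G} {μH : Measure H} [SFinite μG] [SFinite μH]
  [μG.IsMulLeftInvariant] {β : G → ℝ≥0∞}

theorem lintegral_lintegral_mul_bruhat (hβ : Measurable β)
    (hβ1 : ∀ y, ∫⁻ h, β ((h : G)⁻¹ * y) ∂μH = 1) {w : G → ℝ≥0∞} (hw : Measurable w) :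
    ∫⁻ h, ∫⁻ y, w ((h : G) * y) * β y ∂μG ∂μH = ∫⁻ y, w y ∂μG := by
  calc ∫⁻ h, ∫⁻ y, w ((h : G) * y) * β y ∂μG ∂μH
      = ∫⁻ h, ∫⁻ y, w y * β ((h : G)⁻¹ * y) ∂μG ∂μH := lintegral_congr fun h => by
        simpa using lintegral_mul_left_eq_self (μ := μG) (fun y => w y * β ((h : G)⁻¹ * y)) h
    _ = ∫⁻ y, ∫⁻ h, w y * β ((h : G)⁻¹ * y) ∂μH ∂μG :=
        lintegral_lintegral_swap (by fun_prop)
    _ = ∫⁻ y, w y ∂μG := lintegral_congr fun y => by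
        rw [lintegral_const_mul (f := fun h : H => β ((h : G)⁻¹ * y)) _ (hβ.comp (by fun_prop)),
          hβ1, mul_one]

theorem exists_reiter_function_of_lintegral (hβ : Measurable β)
    (hβ1 : ∀ y, ∫⁻ h, β ((h : G)⁻¹ * y) ∂μH = 1) {g : G → ℝ} (hg : Measurable g)
    (hg1 : ∫⁻ x, ENNReal.ofReal (g x) ∂μG = 1) {F : Set H} {ε : ℝ}
    (hF : ∀ z ∈ F, ∫⁻ x, ENNReal.ofReal |g ((z : G)⁻¹ * x) - g x| ∂μG < ENNReal.ofReal ε) :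
    ∃ U : H → ℝ, (∀ y, 0 ≤ U y) ∧ Integrable U μH ∧ ∫ y, U y ∂μH = 1 ∧
      ∀ z ∈ F, ∫ y, |U (z⁻¹ * y) - U y| ∂μH < ε := by
  set V : H → ℝ≥0∞ := fun h => ∫⁻ y, ENNReal.ofReal (g ((h : G) * y)) * β y ∂μG
  have hV : Measurable V := Measurable.lintegral_prod_right'
    (f := fun p : H × G => ENNReal.ofReal (g ((p.1 : G) * p.2)) * β p.2) (by fun_prop)
  have hV1 : ∫⁻ h, V h ∂μH = 1 := (lintegral_lintegral_mul_bruhat hβ hβ1 (by fun_prop)).trans hg1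
  have hVfin : ∫⁻ h, V h ∂μH ≠ ⊤ := by simp [hV1]
  refine ⟨fun h => (V h).toReal, fun _ => ENNReal.toReal_nonneg,
    integrable_toReal_of_lintegral_ne_top hV.aemeasurable hVfin, ?_, fun z hz => ?_⟩
  · rw [integral_toReal hV.aemeasurable (ae_lt_top hV hVfin), hV1, ENNReal.toReal_one]
  set w : G → ℝ≥0∞ := fun x => ENNReal.ofReal |g ((z : G)⁻¹ * x) - g x|
  have hofReal (a b : ℝ) : ENNReal.ofReal a ≤ ENNReal.ofReal b + ENNReal.ofReal |a - b| :=
    (ENNReal.ofReal_le_ofReal (by linarith [le_abs_self (a - b)])).trans ENNReal.ofReal_add_le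
  refine integral_abs_toReal_sub_toReal_lt (d := fun h : H => ∫⁻ y, w ((h : G) * y) * β y ∂μG)
    (Measurable.lintegral_prod_right' (f := fun p : H × G => w ((p.1 : G) * p.2) * β p.2)
      (by fun_prop)) (fun h => ?_) (fun h => ?_)
    ((lintegral_lintegral_mul_bruhat hβ hβ1 (by fun_prop)).trans_lt (hF z hz))
  · rw [← lintegral_add_left (by fun_prop)]
    refine lintegral_mono fun y => ?_
    rw [← add_mul, Subgroup.coe_mul, Subgroup.coe_inv, mul_assoc]
    exact mul_le_mul_left (hofReal _ _) _
  · rw [← lintegral_add_left (by fun_prop)]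
    refine lintegral_mono fun y => ?_
    rw [← add_mul, Subgroup.coe_mul, Subgroup.coe_inv, mul_assoc]
    exact mul_le_mul_left ((hofReal _ _).trans_eq (by rw [abs_sub_comm])) _

end Transfer

/-- If the left regular representation of a closed subgroup H on L^Φ(G)
(Φ a Δ₂-regular N-function) almost has invariant vectors, then H satisfies
Reiter's condition (P₁). -/
theorem almost_invariant_implies_reiterP1 {G : Type*} [Group G] [TopologicalSpace G]
    [IsTopologicalGroup G] [LocallyCompactSpace G] [SecondCountableTopology G]
    [MeasurableSpace G] [BorelSpace G]
    (μG : Measure G) [μG.IsHaarMeasure]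
    (H : Subgroup G) (hH : IsClosed (H : Set G))
    (μH : Measure H) [μH.IsHaarMeasure]
    (Φ : ℝ → ℝ) (hΦ : IsNFunction Φ)
    (hΔ2 : ∃ K > 2, ∀ x : ℝ, 0 ≤ x → Φ (2 * x) ≤ K * Φ x)
    (hai : ∀ F : Set H, IsCompact F → ∀ ε > 0, ∃ f : G → ℝ,
      MemOrlicz μG Φ f ∧ gaugeNorm μG Φ f = 1 ∧
      ∀ z ∈ F, gaugeNorm μG Φ (fun x => f ((z : G)⁻¹ * x) - f x) ≤ ε) :
    ∀ F : Set H, IsCompact F → ∀ ε > 0, ∃ U : H → ℝ,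
      (∀ y, 0 ≤ U y) ∧ Integrable U μH ∧ (∫ y, U y ∂μH = 1) ∧
      ∀ z ∈ F, ∫ y, |U (z⁻¹ * y) - U y| ∂μH < ε := by
  obtain ⟨heven, hconv, hzero, -, -⟩ := hΦ
  obtain ⟨K, hK, hΔ⟩ := hΔ2
  have : SigmaFinite μH := sigmaFinite_of_isClosed hH μH
  obtain ⟨β, hβ, hβ1⟩ := exists_bruhat_function hH μH
  intro F hF ε hε
  set s := min (1 / 2) (ε / (4 * K))
  have hs0 : 0 < s := lt_min one_half_pos (by positivity)
  have hsK : 3 * s * K < ε := calc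
    3 * s * K ≤ 3 * (ε / (4 * K)) * K := by gcongr; exact min_le_right _ _
    _ = 3 / 4 * ε := by field_simp
    _ < ε := by linarith
  obtain ⟨f, ⟨hf, -⟩, hf1, hfF⟩ := hai F hF (s / 2) (by positivity)
  obtain ⟨g, hg, hg1, hgF⟩ := exists_density_of_gaugeNorm_eq_one heven hconv ((hzero 0).2 rfl) hΔ
    (by linarith) hs0 (min_le_left _ _) hf.measurable_mk
    ((gaugeNorm_congr_ae hf.ae_eq_mk).symm.trans hf1)
  refine exists_reiter_function_of_lintegral hβ hβ1 hg hg1 fun z hz =>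
    (hgF _ ?_).trans_lt ((ENNReal.ofReal_lt_ofReal_iff hε).2 hsK)
  rw [← gaugeNorm_comp_mul_left_sub_congr_ae hf.ae_eq_mk]
  linarith [hfF z hz]
end
end
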